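/- Let X = (V,E) and Y = (V',E') be digraphs and X·Y their product, a digraph on V ⊔ V'. Then the number of (V ⊔ V')-listings σ with (X·Y) Des(σ) = ∅ equals the product of the number of V-listings τ with X Des(τ) = ∅ and the number of V'-listings ρ with Y Des(ρ) = ∅. (Equivalently, the character ζ counting Hamiltonian paths of the complementary digraph is multiplicative: ζ(X·Y) = ζ(X)·ζ(Y).) -/

import Mathlib

/-- The 1-based `X`-descent set of a listing `l = (σ_1, …, σ_n)`:
the set of `i ∈ [n-1]` with `(σ_i, σ_{i+1}) ∈ E`. -/
def XDes {V : Type*} (E : V → V → Prop) (l : List V) : Set ℕ :=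
  {i : ℕ | ∃ (h1 : 1 ≤ i) (h2 : i ≤ l.length - 1),
    E (l.get ⟨i - 1, by omega⟩) (l.get ⟨i, by omega⟩)}

/-- Edge relation of the product digraph `X · Y` on the disjoint union `V ⊔ V'`:
edges of `X`, edges of `Y`, and all pairs from `V` to `V'`. -/
def prodEdge {V V' : Type*} (E : V → V → Prop) (E' : V' → V' → Prop) :
    V ⊕ V' → V ⊕ V' → Prop
  | Sum.inl u, Sum.inl v => E u v
  | Sum.inr u, Sum.inr v => E' u v
  | Sum.inl _, Sum.inr _ => True
  | Sum.inr _, Sum.inl _ => False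


/-!
Every pair `(u, v)` with `u ∈ V`, `v ∈ V'` is an edge of `X · Y` and no pair `(v, u)` is, so a
listing of `V ⊔ V'` without `X · Y`-descents lists all of `V'` before any vertex of `V`: it is
the concatenation `ρ ++ τ` of a descent-free `V'`-listing `ρ` and a descent-free `V`-listing
`τ`, and every such concatenation is descent-free. Concatenation is therefore a bijection.
-/

open List

def IsDescentFree {V : Type*} (E : V → V → Prop) (l : List V) : Prop :=
  l.Nodup ∧ (∀ x, x ∈ l) ∧ XDes E l = ∅

theorem xDes_eq_empty_iff {V : Type*} (E : V → V → Prop) (l : List V) :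
    XDes E l = ∅ ↔ l.IsChain (fun a b => ¬ E a b) := by
  rw [isChain_iff_getElem, Set.eq_empty_iff_forall_notMem]
  constructor
  · intro h i hi hEi
    exact h (i + 1) ⟨by omega, by omega, by simpa using hEi⟩
  · rintro h i ⟨h1, h2, hEi⟩
    obtain ⟨i, rfl⟩ := Nat.exists_eq_add_of_le' h1
    exact h i (by omega) (by simpa using hEi)

section ProdEdge

variable {V V' : Type*} (E : V → V → Prop) (E' : V' → V' → Prop)

theorem exists_eq_map_inr_append_map_inl {l : List (V ⊕ V')}
    (hl : l.IsChain (fun a b => ¬ prodEdge E E' a b)) :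
    ∃ (ρ : List V') (τ : List V), l = ρ.map Sum.inr ++ τ.map Sum.inl := by
  induction l with
  | nil => exact ⟨[], [], rfl⟩
  | cons x t ih =>
    obtain ⟨ρ, τ, rfl⟩ := ih hl.tail
    cases x with
    | inr b => exact ⟨b :: ρ, τ, rfl⟩
    | inl a =>
      cases ρ with
      | nil => exact ⟨[], a :: τ, rfl⟩
      | cons b ρ => exact absurd trivial (isChain_cons_cons.mp hl).1

theorem isChain_map_inr_append_map_inl_iff (ρ : List V') (τ : List V) :
    (ρ.map Sum.inr ++ τ.map Sum.inl).IsChain (fun a b => ¬ prodEdge E E' a b) ↔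
      τ.IsChain (fun a b => ¬ E a b) ∧ ρ.IsChain (fun a b => ¬ E' a b) := by
  simp [isChain_append, isChain_map, prodEdge, and_comm]

theorem isDescentFree_map_inr_append_map_inl_iff (ρ : List V') (τ : List V) :
    IsDescentFree (prodEdge E E') (ρ.map Sum.inr ++ τ.map Sum.inl) ↔
      IsDescentFree E τ ∧ IsDescentFree E' ρ := by
  simp only [IsDescentFree, xDes_eq_empty_iff, isChain_map_inr_append_map_inl_iff]
  simp [nodup_append, nodup_map_iff Sum.inl_injective, nodup_map_iff Sum.inr_injective,
    Sum.forall]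
  tauto

theorem map_inr_append_map_inl_inj {ρ ρ' : List V'} {τ τ' : List V} :
    ρ.map Sum.inr ++ τ.map Sum.inl = ρ'.map Sum.inr ++ τ'.map Sum.inl ↔ ρ = ρ' ∧ τ = τ' := by
  refine ⟨fun h => ?_, fun ⟨hρ, hτ⟩ => hρ ▸ hτ ▸ rfl⟩
  have hτ := congrArg (filterMap Sum.getLeft?) h
  have hρ := congrArg (filterMap Sum.getRight?) h
  simp only [filterMap_append, filterMap_map] at hτ hρ
  simp_all [Function.comp_def]

def appendListings :
    {τ : List V // IsDescentFree E τ} × {ρ : List V' // IsDescentFree E' ρ} →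
      {l : List (V ⊕ V') // IsDescentFree (prodEdge E E') l} :=
  fun p => ⟨p.2.1.map Sum.inr ++ p.1.1.map Sum.inl,
    (isDescentFree_map_inr_append_map_inl_iff E E' _ _).2 ⟨p.1.2, p.2.2⟩⟩

theorem appendListings_bijective : Function.Bijective (appendListings E E') := by
  constructor
  · rintro ⟨⟨τ, _⟩, ⟨ρ, _⟩⟩ ⟨⟨τ', _⟩, ⟨ρ', _⟩⟩ h
    obtain ⟨rfl, rfl⟩ := map_inr_append_map_inl_inj.mp (congrArg Subtype.val h)
    rfl
  · rintro ⟨l, hl⟩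
    obtain ⟨ρ, τ, rfl⟩ := exists_eq_map_inr_append_map_inl E E'
      ((xDes_eq_empty_iff _ l).mp hl.2.2)
    obtain ⟨hτ, hρ⟩ := (isDescentFree_map_inr_append_map_inl_iff E E' ρ τ).mp hl
    exact ⟨(⟨τ, hτ⟩, ⟨ρ, hρ⟩), rfl⟩

end ProdEdge

theorem character_multiplicative {V V' : Type*}
    (E : V → V → Prop) (E' : V' → V' → Prop) :
    Nat.card {l : List (V ⊕ V') // l.Nodup ∧ (∀ x, x ∈ l) ∧
        XDes (prodEdge E E') l = ∅} =
      Nat.card {l : List V // l.Nodup ∧ (∀ x, x ∈ l) ∧ XDes E l = ∅} *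
      Nat.card {l : List V' // l.Nodup ∧ (∀ x, x ∈ l) ∧ XDes E' l = ∅} := by
  rw [← Nat.card_prod]
  exact (Nat.card_eq_of_bijective _ (appendListings_bijective E E')).symm
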